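/- arXiv:1303.0701 — 7 statements merged into one kernel-verified Lean document; each statement's English description precedes it below -/
import Mathlib

section
/- Let R be a commutative ring, n a natural number, and M an n×n matrix over R. Let Λ ∈ R[[t]] be the power series given by the polynomial det(1 - t·M) (the reversed characteristic polynomial of M). Then in R[[t]] one has the exponential trace formula in cleared-denominator form: -(t · Λ') = Λ · Σ_{k≥1} tr(M^k) t^k, where Λ' denotes the formal derivative of Λ. -/
/-!
Jacobi's formula `D (det B) = tr (adj B · D B)`, applied over `R⟦t⟧` to `B = 1 - t • M`, gives
`Λ' = -tr (adj B · M)`. The geometric series `G = Σ Mᵏ tᵏ` is a right inverse of `B`, so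
`adj B = Λ • G` and `-t Λ' = Λ · t · tr (M G) = Λ · Σ_{k ≥ 1} tr (Mᵏ) tᵏ`.
-/

open PowerSeries

namespace Derivation

variable {R A M : Type*} [CommSemiring R] [CommSemiring A] [AddCommMonoid M] [Algebra R A]
  [Module A M] [Module R M]

theorem leibniz_prod {ι : Type*} [DecidableEq ι] (D : Derivation R A M) (s : Finset ι)
    (f : ι → A) : D (∏ i ∈ s, f i) = ∑ i ∈ s, (∏ j ∈ s.erase i, f j) • D (f i) := by
  induction s using Finset.induction with
  | empty => simp
  | insert a s ha ih =>
    rw [Finset.prod_insert ha, leibniz, ih, Finset.sum_insert ha, Finset.erase_insert ha,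
      Finset.smul_sum, add_comm]
    congr 1
    refine Finset.sum_congr rfl fun i hi => ?_
    rw [Finset.erase_insert_of_ne (ne_of_mem_of_not_mem hi ha).symm,
      Finset.prod_insert (fun h => ha (Finset.mem_of_mem_erase h)), smul_smul]

end Derivation

namespace Matrix

variable {n : Type*} [DecidableEq n]

section Jacobi

variable [Fintype n] {R S : Type*} [CommSemiring R] [CommRing S] [Algebra R S]

theorem derivation_det_eq_sum_det_updateCol (D : Derivation R S S) (A : Matrix n n S) :
    D A.det = ∑ j, (A.updateCol j fun i => D (A i j)).det := by
  simp only [det_apply', map_sum]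
  rw [Finset.sum_comm]
  refine Finset.sum_congr rfl fun σ _ => ?_
  have hsign : D (Equiv.Perm.sign σ : ℤ) = 0 := by
    rw [← zsmul_one, map_zsmul, D.map_one_eq_zero, smul_zero]
  rw [Derivation.leibniz, hsign, smul_zero, add_zero, D.leibniz_prod, Finset.smul_sum]
  refine Finset.sum_congr rfl fun j _ => ?_
  rw [← Finset.mul_prod_erase Finset.univ _ (Finset.mem_univ j),
    Finset.prod_congr rfl fun i hi => updateCol_ne (Finset.ne_of_mem_erase hi)]
  simp only [updateCol_self, smul_eq_mul]
  ring

theorem derivation_det (D : Derivation R S S) (A : Matrix n n S) :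
    D A.det = trace (A.adjugate * A.map D) := by
  rw [derivation_det_eq_sum_det_updateCol, trace]
  refine Finset.sum_congr rfl fun j _ => ?_
  rw [← cramer_apply, cramer_eq_adjugate_mulVec]
  rfl

end Jacobi

theorem adjugate_eq_det_smul_of_mul_eq_one [Fintype n] {S : Type*} [CommRing S]
    {A N : Matrix n n S} (h : A * N = 1) : A.adjugate = A.det • N :=
  calc A.adjugate = A.adjugate * (A * N) := by rw [h, mul_one]
    _ = A.det • N := by rw [← mul_assoc, adjugate_mul, smul_mul, one_mul]

variable {R : Type*} [CommRing R] (M : Matrix n n R)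

theorem derivative_map_one_sub_X_smul :
    (1 - (X : R⟦X⟧) • M.map C).map (d⁄dX R) = -M.map C := by
  ext i j
  simp [one_apply, apply_ite (d⁄dX R)]

variable [Fintype n]

theorem coe_charpolyRev : (M.charpolyRev : R⟦X⟧) = (1 - (X : R⟦X⟧) • M.map C).det := by
  rw [charpolyRev, ← Polynomial.coeToPowerSeries.ringHom_apply, RingHom.map_det]
  congr 1
  refine Matrix.ext fun i j => ?_
  by_cases h : i = j <;> simp [h, (commute_X _).eq]

def geomSeries : Matrix n n R⟦X⟧ :=
  of fun i j => mk fun k => (M ^ k) i j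

theorem map_C_mul_geomSeries :
    M.map C * M.geomSeries = of fun i j => mk fun k => (M ^ (k + 1)) i j := by
  ext i j k
  simp [geomSeries, mul_apply, map_sum, pow_succ', coeff_C_mul]

theorem X_smul_map_C_mul_geomSeries :
    (X : R⟦X⟧) • (M.map C * M.geomSeries) = M.geomSeries - 1 := by
  ext i j (_ | k)
  · simp [geomSeries, one_apply, apply_ite (constantCoeff (R := R))]
  · rw [smul_apply, smul_eq_mul, map_C_mul_geomSeries, coeff_succ_X_mul]
    simp [geomSeries, one_apply, apply_ite (coeff (R := R) (k + 1)), coeff_one]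

theorem one_sub_X_smul_mul_geomSeries : (1 - (X : R⟦X⟧) • M.map C) * M.geomSeries = 1 := by
  rw [sub_mul, one_mul, smul_mul, X_smul_map_C_mul_geomSeries, sub_sub_cancel]

theorem X_mul_trace_map_C_mul_geomSeries :
    (X : R⟦X⟧) * trace (M.map C * M.geomSeries) =
      mk fun k => if k = 0 then 0 else trace (M ^ k) := by
  ext (_ | k)
  · simp
  · simp [map_C_mul_geomSeries, trace, map_sum]

end Matrix

/-- The exponential trace formula in cleared-denominator form: for a commutative ring `R`
and an `n × n` matrix `M` over `R`, with `Λ = det(1 - t·M)` viewed in `R⟦t⟧`, we have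
`-(t·Λ') = Λ · Σ_{k ≥ 1} tr(M^k) t^k`. -/
theorem exponential_trace_formula (R : Type*) [CommRing R] (n : ℕ)
    (M : Matrix (Fin n) (Fin n) R) :
    -(PowerSeries.X * d⁄dX R
        (((1 - (Polynomial.X : Polynomial R) • M.map Polynomial.C).det : Polynomial R) : R⟦X⟧)) =
      (((1 - (Polynomial.X : Polynomial R) • M.map Polynomial.C).det : Polynomial R) : R⟦X⟧) *
        PowerSeries.mk (fun k => if k = 0 then 0 else (M ^ k).trace) := by
  change -(X * d⁄dX R (M.charpolyRev : R⟦X⟧)) = (M.charpolyRev : R⟦X⟧) * _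
  rw [Matrix.coe_charpolyRev, Matrix.derivation_det, Matrix.derivative_map_one_sub_X_smul,
    Matrix.adjugate_eq_det_smul_of_mul_eq_one (Matrix.one_sub_X_smul_mul_geomSeries M),
    ← Matrix.X_mul_trace_map_C_mul_geomSeries, Matrix.mul_neg, Matrix.trace_neg,
    Matrix.smul_mul, Matrix.trace_smul, Matrix.trace_mul_comm, smul_eq_mul]
  ring
end

section
/- Let R be a commutative ring which is torsion-free in the sense that for every natural number n > 0, multiplication by n is injective on R (n•x = 0 implies x = 0). If f, g ∈ R[[t]] both have constant coefficient 1 and satisfy t·f'·g = t·g'·f (i.e., they have the same ghost series), then f = g. In other words, the ghost map is injective on power series with constant coefficient 1. -/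
/-!
Since `g` is a unit, the hypothesis says that `f / g` has derivative `(f' g - g' f) / g² = 0`.
Over a torsion-free ring a power series is determined by its derivative and its constant term,
so `f / g = 1`.
-/

namespace PowerSeries

variable {R : Type*} [CommRing R]

theorem derivative_mul_inv_eq_zero {f : R⟦X⟧} (g : R⟦X⟧ˣ)
    (hD : d⁄dX R f * g = d⁄dX R g * f) : d⁄dX R (f * ↑g⁻¹) = 0 := by
  have hg : (g : R⟦X⟧) * ↑g⁻¹ = 1 := g.mul_inv
  rw [Derivation.leibniz, derivative_inv, smul_eq_mul, smul_eq_mul]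
  linear_combination (↑g⁻¹ : R⟦X⟧) ^ 2 * hD - d⁄dX R f * ↑g⁻¹ * hg

theorem eq_of_derivative_mul_eq [IsAddTorsionFree R] {f g : R⟦X⟧} (hg : IsUnit g)
    (hD : d⁄dX R f * g = d⁄dX R g * f) (hc : constantCoeff f = constantCoeff g) : f = g := by
  obtain ⟨u, rfl⟩ := hg
  have hquot : f * ↑u⁻¹ = 1 := by
    refine derivative.ext ?_ ?_
    · rw [derivative_mul_inv_eq_zero u hD, derivative_one]
    · rw [map_mul, hc, ← map_mul, u.mul_inv, map_one]
  simpa using congrArg (· * (u : R⟦X⟧)) hquot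

end PowerSeries

open PowerSeries

theorem isAddTorsionFree_of_nsmul_eq_zero {M : Type*} [AddCommGroup M]
    (htf : ∀ n : ℕ, 0 < n → ∀ x : M, n • x = 0 → x = 0) : IsAddTorsionFree M where
  nsmul_right_injective n hn x y hxy :=
    sub_eq_zero.mp <| htf n (Nat.pos_of_ne_zero hn) _ <| by
      rw [nsmul_sub, sub_eq_zero]
      exact hxy

/-- Over a torsion-free commutative ring (multiplication by every `n > 0` is injective),
the ghost map is injective on power series with constant coefficient `1`: if
`t·f'·g = t·g'·f` (i.e. `f` and `g` have the same ghost series), then `f = g`. -/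
theorem ghost_map_injective_of_torsionFree (R : Type*) [CommRing R]
    (htf : ∀ n : ℕ, 0 < n → ∀ x : R, n • x = 0 → x = 0)
    (f g : R⟦X⟧) (hf : constantCoeff f = 1) (hg : constantCoeff g = 1)
    (h : PowerSeries.X * d⁄dX R f * g = PowerSeries.X * d⁄dX R g * f) :
    f = g := by
  have := isAddTorsionFree_of_nsmul_eq_zero htf
  have hD : d⁄dX R f * g = d⁄dX R g * f := X_mul_cancel (by simpa only [mul_assoc] using h)
  exact eq_of_derivative_mul_eq (isUnit_iff_constantCoeff.mpr (hg ▸ isUnit_one)) hD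
    (hf.trans hg.symm)
end

section
/- Let R be a commutative ring and f ∈ R[[t]] a power series with constant coefficient 1. Then there exists a unique function b : ℕ → R (with b indexed by positive integers) such that for every N ≥ 1, the coefficients of f in degrees 0 through N agree with the coefficients of the finite product Π_{i=1}^{N} (1 - b_i t^i) in degrees 0 through N. That is, f has a unique decomposition as the infinite product Π_{i≥1} (1 - b_i t^i). -/
/-!
Write `P_N b = ∏_{i=1}^{N} (1 - bᵢ tⁱ)`. The factors with `i > M` are `1` modulo `t^{M+1}`, so the
coefficients of `P_N b` in degrees `≤ M` do not depend on `N ≥ M`, and in degree `n` the last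
factor contributes exactly `-bₙ`: `[tⁿ] P_n b = [tⁿ] P_{n-1} b - bₙ`. Hence `b` is a decomposition
of `f` iff `bₙ = [tⁿ] P_{n-1} b - [tⁿ] f` for all `n ≥ 1`, a recursion with exactly one solution.
-/

open PowerSeries

namespace PowerSeries

variable {R : Type*} [CommRing R]

noncomputable def partialProd (b : ℕ → R) (N : ℕ) : R⟦X⟧ :=
  ∏ i ∈ Finset.Icc 1 N, (1 - C (b i) * X ^ i)

def IsProdDecomposition (f : R⟦X⟧) (b : ℕ → R) : Prop :=
  ∀ N, 1 ≤ N → ∀ j ≤ N, coeff j f = coeff j (partialProd b N)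

lemma lt_order_C_mul_X_pow (a : R) {j i : ℕ} (h : j < i) : (j : ℕ∞) < (C a * X ^ i).order :=
  lt_of_lt_of_le (by exact_mod_cast h) <| nat_le_order _ _ fun k hk => by
    simp [hk.ne]

lemma constantCoeff_partialProd (b : ℕ → R) (N : ℕ) : constantCoeff (partialProd b N) = 1 := by
  refine (map_prod _ _ _).trans (Finset.prod_eq_one fun i hi => ?_)
  have hi : i ≠ 0 := by have := (Finset.mem_Icc.mp hi).1; omega
  simp [hi]

lemma coeff_partialProd_of_le (b : ℕ → R) {j M N : ℕ} (hjM : j ≤ M) (hMN : M ≤ N) :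
    coeff j (partialProd b N) = coeff j (partialProd b M) := by
  have hsplit : partialProd b N = partialProd b M * ∏ i ∈ Finset.Ioc M N, (1 - C (b i) * X ^ i) := by
    have hIcc (K : ℕ) : Finset.Icc 1 K = Finset.Ioc 0 K := Finset.Icc_add_one_left_eq_Ioc 0 K
    simp only [partialProd, hIcc]
    rw [Finset.prod_Ioc_consecutive _ M.zero_le hMN]
  rw [hsplit, coeff_mul_prod_one_sub_of_lt_order]
  exact fun i hi => lt_order_C_mul_X_pow _ (by have := (Finset.mem_Ioc.mp hi).1; omega)

lemma coeff_partialProd_succ (b : ℕ → R) (n : ℕ) :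
    coeff (n + 1) (partialProd b (n + 1)) = coeff (n + 1) (partialProd b n) - b (n + 1) := by
  have hlast : coeff (n + 1) (partialProd b n * C (b (n + 1)) * X ^ (n + 1)) = b (n + 1) := by
    simpa [constantCoeff_partialProd] using coeff_mul_X_pow (partialProd b n * C (b (n + 1))) (n + 1) 0
  rw [partialProd, Finset.prod_Icc_succ_top (by omega), ← partialProd, mul_sub, mul_one, map_sub,
    ← mul_assoc, hlast]

lemma isProdDecomposition_iff {f : R⟦X⟧} (hf : constantCoeff f = 1) (b : ℕ → R) :
    IsProdDecomposition f b ↔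
      ∀ n, b (n + 1) = coeff (n + 1) (partialProd b n) - coeff (n + 1) f := by
  constructor
  · intro hb n
    rw [hb (n + 1) (by omega) (n + 1) le_rfl, coeff_partialProd_succ]
    ring
  · intro hb N _ j hjN
    cases j with
    | zero => simp [hf, constantCoeff_partialProd]
    | succ m =>
      rw [coeff_partialProd_of_le b le_rfl hjN, coeff_partialProd_succ, hb m]
      ring

lemma eq_of_partialProd_recursion {f : R⟦X⟧} {b b' : ℕ → R}
    (hb : ∀ n, b (n + 1) = coeff (n + 1) (partialProd b n) - coeff (n + 1) f)
    (hb' : ∀ n, b' (n + 1) = coeff (n + 1) (partialProd b' n) - coeff (n + 1) f) :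
    ∀ i, 1 ≤ i → b' i = b i := by
  intro i
  induction i using Nat.strong_induction_on with
  | _ i ih =>
    intro hi
    obtain ⟨n, rfl⟩ : ∃ n, i = n + 1 := ⟨i - 1, by omega⟩
    have hprod : partialProd b' n = partialProd b n :=
      Finset.prod_congr rfl fun k hk => by
        have := Finset.mem_Icc.mp hk
        rw [ih k (by omega) this.1]
    rw [hb, hb', hprod]

/-- The value at `0` is arbitrary: no partial product involves `b₀`. -/
noncomputable def prodDecompositionCoeff (f : R⟦X⟧) : ℕ → R
  | 0 => 0
  | n + 1 => coeff (n + 1) (∏ i ∈ (Finset.Icc 1 n).attach,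
      (1 - C (prodDecompositionCoeff f i) * X ^ (i : ℕ))) - coeff (n + 1) f
  decreasing_by have := (Finset.mem_Icc.mp i.2).2; omega

lemma prodDecompositionCoeff_succ (f : R⟦X⟧) (n : ℕ) :
    prodDecompositionCoeff f (n + 1) =
      coeff (n + 1) (partialProd (prodDecompositionCoeff f) n) - coeff (n + 1) f := by
  rw [prodDecompositionCoeff, partialProd,
    Finset.prod_attach _ fun i => 1 - C (prodDecompositionCoeff f i) * X ^ i]

end PowerSeries

/-- Every power series with constant coefficient `1` has a unique decomposition as an
infinite product `Π_{i ≥ 1} (1 - bᵢ tⁱ)`, in the sense that for every `N ≥ 1` its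
coefficients in degrees `0` through `N` agree with those of the finite partial product
`Π_{i=1}^{N} (1 - bᵢ tⁱ)`, and the `bᵢ` (for `i ≥ 1`) are uniquely determined. -/
theorem exists_unique_product_decomposition (R : Type*) [CommRing R] (f : R⟦X⟧)
    (hf : constantCoeff (R := R) f = 1) :
    ∃ b : ℕ → R,
      (∀ N, 1 ≤ N → ∀ j ≤ N, coeff (R := R) j f =
          coeff (R := R) j (∏ i ∈ Finset.Icc 1 N, (1 - C (R := R) (b i) * PowerSeries.X ^ i))) ∧
      ∀ b' : ℕ → R,
        (∀ N, 1 ≤ N → ∀ j ≤ N, coeff (R := R) j f =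
            coeff (R := R) j (∏ i ∈ Finset.Icc 1 N, (1 - C (R := R) (b' i) * PowerSeries.X ^ i))) →
        ∀ i, 1 ≤ i → b' i = b i := by
  refine ⟨prodDecompositionCoeff f,
    (isProdDecomposition_iff hf _).2 (prodDecompositionCoeff_succ f), fun b' hb' => ?_⟩
  exact eq_of_partialProd_recursion (prodDecompositionCoeff_succ f)
    ((isProdDecomposition_iff hf b').1 hb')
end

section
/- Let X and Y be finite sets equipped with permutations σ : X ≃ X and τ : Y ≃ Y (equivalently, finite sets with an action of the infinite cyclic group). If for every natural number n ≥ 1 the number of fixed points of σ^n equals the number of fixed points of τ^n, then the two ℤ-sets are isomorphic: there exists a bijection e : X ≃ Y with e ∘ σ = τ ∘ e. -/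
open Equiv Equiv.Perm Finset

private lemma count_fixed {α : Type*} [Fintype α] [DecidableEq α]
    (π : Equiv.Perm α) (n : ℕ) :
    (Finset.univ.filter fun x => (π ^ n) x = x).card
      = (Finset.univ.filter fun x => π x = x).card
        + (π.cycleType.filter (· ∣ n)).sum := by
  classical
  have hsplit := Finset.card_filter_add_card_filter_not
    (s := Finset.univ.filter fun x => (π ^ n) x = x) (p := fun x => π x = x)
  have h1 : (Finset.univ.filter fun x => (π ^ n) x = x).filter (fun x => π x = x)
      = Finset.univ.filter fun x => π x = x := by
    ext x
    simp only [Finset.mem_filter, Finset.mem_univ, true_and, and_iff_right_iff_imp]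
    exact fun hx => pow_apply_eq_self_of_apply_eq_self hx n
  have h2 : (Finset.univ.filter fun x => (π ^ n) x = x).filter (fun x => ¬ π x = x)
      = π.support.filter fun x => (π ^ n) x = x := by
    ext x
    simp only [Finset.mem_filter, Finset.mem_univ, true_and, mem_support]
    tauto
  rw [h1, h2] at hsplit
  rw [← hsplit]
  congr 1
  set T := π.cycleFactorsFinset.filter (fun c => c.support.card ∣ n) with hT
  have hfiber : ∀ x ∈ π.support.filter (fun x => (π ^ n) x = x), π.cycleOf x ∈ T := by
    intro x hx
    simp only [Finset.mem_filter, mem_support] at hx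
    obtain ⟨hx1, hx2⟩ := hx
    have hcyc : (π.cycleOf x).IsCycle := isCycle_cycleOf π hx1
    have hxs : (π.cycleOf x) x ≠ x := by rw [cycleOf_apply_self]; exact hx1
    have hone : (π.cycleOf x) ^ n = 1 := by
      rw [hcyc.pow_eq_one_iff' hxs, cycleOf_pow_apply_self]; exact hx2
    have hdvd : (π.cycleOf x).support.card ∣ n := by
      rw [← hcyc.orderOf]; exact orderOf_dvd_of_pow_eq_one hone
    simp only [hT, Finset.mem_filter]
    exact ⟨cycleOf_mem_cycleFactorsFinset_iff.mpr (mem_support.mpr hx1), hdvd⟩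
  rw [Finset.card_eq_sum_card_fiberwise hfiber]
  have hfib_eq : ∀ c ∈ T,
      ((π.support.filter fun x => (π ^ n) x = x).filter fun x => π.cycleOf x = c)
        = c.support := by
    intro c hc
    simp only [hT, Finset.mem_filter] at hc
    obtain ⟨hc1, hc2⟩ := hc
    ext x
    simp only [Finset.mem_filter]
    constructor
    · rintro ⟨⟨hx1, _⟩, hx3⟩
      rw [← hx3, mem_support, cycleOf_apply_self]
      exact mem_support.mp hx1
    · intro hx
      have hco : c = π.cycleOf x := cycle_is_cycleOf hx hc1
      have hx1 : x ∈ π.support := mem_cycleFactorsFinset_support_le hc1 hx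
      have hcyc : c.IsCycle := (mem_cycleFactorsFinset_iff.mp hc1).1
      refine ⟨⟨hx1, ?_⟩, hco.symm⟩
      have hcn : c ^ n = 1 := by
        rw [← hcyc.orderOf] at hc2
        exact orderOf_dvd_iff_pow_eq_one.mp hc2
      rw [← cycleOf_pow_apply_self, ← hco, hcn, one_apply]
  rw [Finset.sum_congr rfl (fun c hc => by rw [hfib_eq c hc])]
  rw [cycleType_def, Multiset.filter_map]
  simp [Finset.sum, hT, Finset.filter_val, Function.comp]

private lemma multiset_eq_of_filter_dvd_sum_eq (A B : Multiset ℕ)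
    (hA : ∀ a ∈ A, 2 ≤ a) (hB : ∀ b ∈ B, 2 ≤ b)
    (hs : ∀ n : ℕ, 1 ≤ n → (A.filter (· ∣ n)).sum = (B.filter (· ∣ n)).sum) :
    A = B := by
  classical
  ext d
  induction d using Nat.strong_induction_on with
  | _ d ih =>
  rcases lt_or_ge d 2 with hd | hd
  · rw [Multiset.count_eq_zero.2 (fun hm => absurd (hA d hm) (by omega)),
      Multiset.count_eq_zero.2 (fun hm => absurd (hB d hm) (by omega))]
  · have key := hs d (by omega)
    have split : ∀ C : Multiset ℕ,
        C.filter (· ∣ d) = C.filter (· = d) + C.filter (fun j => j ∣ d ∧ j ≠ d) := by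
      intro C
      ext j
      rw [Multiset.count_add]
      simp only [Multiset.count_filter]
      by_cases h1 : j = d
      · subst h1; simp
      · by_cases h2 : j ∣ d <;> simp [h1, h2]
    have eqsmall : A.filter (fun j => j ∣ d ∧ j ≠ d)
        = B.filter (fun j => j ∣ d ∧ j ≠ d) := by
      ext j
      simp only [Multiset.count_filter]
      split_ifs with hj
      · have hjd : j < d := lt_of_le_of_ne (Nat.le_of_dvd (by omega) hj.1) hj.2
        exact ih j hjd
      · rfl
    rw [split A, split B, Multiset.sum_add, Multiset.sum_add, eqsmall,
      Multiset.filter_eq', Multiset.filter_eq'] at key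
    have key2 := Nat.add_right_cancel key
    rw [Multiset.sum_replicate, Multiset.sum_replicate, smul_eq_mul, smul_eq_mul] at key2
    exact Nat.eq_of_mul_eq_mul_right (by omega) key2

/-- Two finite `ℤ`-sets (finite sets with a permutation) with the same number of fixed
points for every power of the permutation are isomorphic: there is an equivariant
bijection. -/
theorem zset_iso_of_fixedPoints_card_eq (X Y : Type*) [Finite X] [Finite Y]
    (σ : Equiv.Perm X) (τ : Equiv.Perm Y)
    (h : ∀ n : ℕ, 1 ≤ n →
      Nat.card {x : X // (σ ^ n) x = x} = Nat.card {y : Y // (τ ^ n) y = y}) :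
    ∃ e : X ≃ Y, ∀ x : X, e (σ x) = τ (e x) := by
  classical
  cases nonempty_fintype X
  cases nonempty_fintype Y
  -- card equality
  have hN1 : 0 < orderOf σ * orderOf τ := Nat.mul_pos (orderOf_pos σ) (orderOf_pos τ)
  have hcard : Fintype.card X = Fintype.card Y := by
    have hh := h (orderOf σ * orderOf τ) hN1
    have hσ : σ ^ (orderOf σ * orderOf τ) = 1 := by
      rw [pow_mul, pow_orderOf_eq_one, one_pow]
    have hτ : τ ^ (orderOf σ * orderOf τ) = 1 := by
      rw [mul_comm, pow_mul, pow_orderOf_eq_one, one_pow]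
    have hX : Nat.card {x : X // (σ ^ (orderOf σ * orderOf τ)) x = x} = Nat.card X :=
      Nat.card_congr (Equiv.subtypeUnivEquiv (by simp [hσ]))
    have hY : Nat.card {y : Y // (τ ^ (orderOf σ * orderOf τ)) y = y} = Nat.card Y :=
      Nat.card_congr (Equiv.subtypeUnivEquiv (by simp [hτ]))
    rw [hX, hY, Nat.card_eq_fintype_card, Nat.card_eq_fintype_card] at hh
    exact hh
  obtain e0 := Fintype.equivOfCardEq hcard
  -- transport τ to a permutation of X
  set τ' : Equiv.Perm X := e0.permCongr.symm τ with hτ'def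
  have hτ'pow : ∀ n : ℕ, ∀ x : X, (τ' ^ n) x = e0.symm ((τ ^ n) (e0 x)) := by
    intro n
    induction n with
    | zero => simp
    | succ n ihn =>
      intro x
      rw [pow_succ, pow_succ, Equiv.Perm.mul_apply, Equiv.Perm.mul_apply, ihn]
      simp [hτ'def]
  -- fixed point counts agree for σ and τ'
  have hfix : ∀ n : ℕ, 1 ≤ n →
      (Finset.univ.filter fun x => (σ ^ n) x = x).card
        = (Finset.univ.filter fun x => (τ' ^ n) x = x).card := by
    intro n hn
    have hh := h n hn
    have htrans : Nat.card {x : X // (τ' ^ n) x = x} = Nat.card {y : Y // (τ ^ n) y = y} :=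
      Nat.card_congr (e0.subtypeEquiv fun x => by
        rw [hτ'pow n x, Equiv.symm_apply_eq])
    rw [← htrans, Nat.card_eq_fintype_card, Nat.card_eq_fintype_card,
      Fintype.card_subtype, Fintype.card_subtype] at hh
    exact hh
  -- cycle types agree
  have hct : σ.cycleType = τ'.cycleType := by
    apply multiset_eq_of_filter_dvd_sum_eq _ _
      (fun a ha => two_le_of_mem_cycleType ha) (fun a ha => two_le_of_mem_cycleType ha)
    intro n hn
    have h1 := hfix 1 le_rfl
    have hn' := hfix n hn
    rw [count_fixed σ n, count_fixed τ' n] at hn'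
    simp only [pow_one] at h1
    rw [h1] at hn'
    exact Nat.add_left_cancel hn'
  obtain ⟨g, hg⟩ := isConj_iff.mp (Equiv.Perm.isConj_iff_cycleType_eq.mpr hct)
  refine ⟨g.trans e0, fun x => ?_⟩
  have hx : g (σ x) = τ' (g x) := by
    rw [← hg]
    simp [Equiv.Perm.mul_apply]
  have hτ'apply : ∀ z : X, τ' z = e0.symm (τ (e0 z)) := by
    intro z
    simpa using hτ'pow 1 z
  simp only [Equiv.trans_apply]
  rw [hx, hτ'apply, Equiv.apply_symm_apply]
end

section
/- Let X be a finite set, σ a permutation of X, and n ≥ 1. Let τ be the permutation of Fin n × X defined by τ(i, x) = (i+1, x) if i+1 < n and τ(n-1, x) = (0, σ(x)) (the Verschiebung, i.e., the C-set induced from (X, σ) along the inclusion nC ⊆ C). Then for every k ≥ 1, the number of fixed points of τ^k equals n times the number of fixed points of σ^{k/n} if n divides k, and equals 0 if n does not divide k. -/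
/-- Fixed points of powers of the Verschiebung: if `τ` is the permutation of
`Fin n × X` induced from a permutation `σ` of a finite set `X`
(`τ(i,x) = (i+1,x)` for `i+1 < n` and `τ(n-1,x) = (0,σ x)`), then for `k ≥ 1`
the number of fixed points of `τ^k` is `n` times the number of fixed points of
`σ^(k/n)` if `n ∣ k`, and `0` otherwise. -/
theorem verschiebung_fixedPoints_card (X : Type*) [Finite X] (σ : Equiv.Perm X)
    (n : ℕ) (hn : 1 ≤ n) (τ : Equiv.Perm (Fin n × X))
    (hτ : ∀ p : Fin n × X, τ p =
      if h : (p.1 : ℕ) + 1 < n then (⟨(p.1 : ℕ) + 1, h⟩, p.2) else (⟨0, hn⟩, σ p.2)) :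
    ∀ k : ℕ, 1 ≤ k →
      Nat.card {q : Fin n × X // (τ ^ k) q = q} =
        if n ∣ k then n * Nat.card {x : X // (σ ^ (k / n)) x = x} else 0 := by
  have hn' : 0 < n := hn
  have key : ∀ (k : ℕ) (p : Fin n × X), (τ ^ k) p =
      (⟨((p.1 : ℕ) + k) % n, Nat.mod_lt _ hn'⟩, (σ ^ (((p.1 : ℕ) + k) / n)) p.2) := by
    intro k
    induction k with
    | zero =>
      intro p
      have h1 : ((p.1 : ℕ) + 0) % n = (p.1 : ℕ) := by
        simp [Nat.mod_eq_of_lt p.1.isLt]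
      have h2 : ((p.1 : ℕ) + 0) / n = 0 := by
        simp [Nat.div_eq_of_lt p.1.isLt]
      simp only [pow_zero, Equiv.Perm.coe_one, id_eq, h1, h2, pow_zero]
    | succ k ih =>
      intro p
      have hstep : (τ ^ (k + 1)) p = (τ ^ k) (τ p) := by
        rw [pow_succ, Equiv.Perm.mul_apply]
      rw [hstep, hτ p]
      by_cases h : (p.1 : ℕ) + 1 < n
      · rw [dif_pos h, ih]
        have : (p.1 : ℕ) + 1 + k = (p.1 : ℕ) + (k + 1) := by omega
        simp [this]
      · rw [dif_neg h, ih]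
        have hp1 : (p.1 : ℕ) + 1 = n := by
          have := p.1.isLt; omega
        have hmod : ((p.1 : ℕ) + (k + 1)) % n = (0 + k) % n := by
          have : (p.1 : ℕ) + (k + 1) = n + k := by omega
          rw [this, Nat.add_mod_left]
          simp
        have hdiv : ((p.1 : ℕ) + (k + 1)) / n = (0 + k) / n + 1 := by
          have : (p.1 : ℕ) + (k + 1) = k + 1 * n := by omega
          rw [this, Nat.add_mul_div_right _ _ hn']
          simp
        refine Prod.ext (Fin.ext ?_) ?_
        · simp [hmod]
        · simp only [hdiv, pow_succ, Equiv.Perm.mul_apply]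
  intro k hk
  by_cases hdvd : n ∣ k
  · rw [if_pos hdvd]
    obtain ⟨m, rfl⟩ := hdvd
    have hkn : n * m / n = m := Nat.mul_div_cancel_left m hn'
    have hq : ∀ q : Fin n × X, (τ ^ (n * m)) q = q ↔ (σ ^ m) q.2 = q.2 := by
      rintro ⟨i, x⟩
      have hmod : ((i : ℕ) + n * m) % n = (i : ℕ) := by
        rw [Nat.add_mul_mod_self_left, Nat.mod_eq_of_lt i.isLt]
      have hdiv : ((i : ℕ) + n * m) / n = m := by
        rw [Nat.add_mul_div_left _ _ hn', Nat.div_eq_of_lt i.isLt]; omega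
      rw [key]
      simp [Prod.ext_iff, Fin.ext_iff, hmod, hdiv]
    have e : {q : Fin n × X // (τ ^ (n * m)) q = q} ≃ Fin n × {x : X // (σ ^ m) x = x} :=
      { toFun := fun q => (q.1.1, ⟨q.1.2, (hq q.1).1 q.2⟩)
        invFun := fun p => ⟨(p.1, p.2.1), (hq (p.1, p.2.1)).2 p.2.2⟩
        left_inv := fun q => by ext <;> rfl
        right_inv := fun p => rfl }
    rw [Nat.card_congr e, Nat.card_prod, Nat.card_eq_fintype_card, Fintype.card_fin, hkn]
  · rw [if_neg hdvd]
    have : IsEmpty {q : Fin n × X // (τ ^ k) q = q} := by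
      refine ⟨fun q => hdvd ?_⟩
      obtain ⟨⟨i, x⟩, h⟩ := q
      rw [key] at h
      have h1 : ((i : ℕ) + k) % n = (i : ℕ) := by
        have := congrArg (fun p => ((Prod.fst p : Fin n) : ℕ)) h
        simpa using this
      have : (i : ℕ) ≡ (i : ℕ) + k [MOD n] := by
        unfold Nat.ModEq
        rw [h1, Nat.mod_eq_of_lt i.isLt]
      have := (Nat.modEq_iff_dvd' (Nat.le_add_right _ _)).mp this
      simpa using this
    simp [Nat.card_of_isEmpty]
end

section
/- Let A be a unital C*-algebra and let φ, ψ ∈ A be symmetric forms, i.e., selfadjoint invertible elements. If φ and ψ are connected by a continuous path of selfadjoint invertible elements of A, then φ and ψ are isometric: there exists an invertible k ∈ A with k*·φ·k = ψ. -/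
set_option linter.unusedVariables false
set_option linter.unreachableTactic false
set_option linter.unusedTactic false
set_option linter.deprecated false

section Aux
variable {A : Type*} [CStarAlgebra A]

/-- Two elements are congruent if related by `k* ⬝ a ⬝ k` for invertible `k`. -/
def IsCongruent (a b : A) : Prop := ∃ k : A, IsUnit k ∧ star k * a * k = b

lemma IsCongruent.refl (a : A) : IsCongruent a a := ⟨1, isUnit_one, by simp⟩

lemma IsCongruent.trans {a b c : A} (h1 : IsCongruent a b) (h2 : IsCongruent b c) :
    IsCongruent a c := by
  obtain ⟨k1, hk1, e1⟩ := h1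
  obtain ⟨k2, hk2, e2⟩ := h2
  refine ⟨k1 * k2, hk1.mul hk2, ?_⟩
  have : star k2 * (star k1 * a * k1) * k2 = c := by rw [e1, e2]
  rw [← this, star_mul]
  simp only [mul_assoc]

lemma IsCongruent.symm {a b : A} (h : IsCongruent a b) : IsCongruent b a := by
  obtain ⟨k, hk, e⟩ := h
  refine ⟨↑hk.unit⁻¹, hk.unit⁻¹.isUnit, ?_⟩
  have h1 : k * ↑hk.unit⁻¹ = 1 := hk.mul_val_inv
  calc star ↑hk.unit⁻¹ * b * ↑hk.unit⁻¹
      = star ↑hk.unit⁻¹ * (star k * a * k) * ↑hk.unit⁻¹ := by rw [e]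
    _ = star (k * ↑hk.unit⁻¹) * a * (k * ↑hk.unit⁻¹) := by
        rw [star_mul]; simp only [mul_assoc]
    _ = a := by rw [h1]; simp

end Aux

section Key
variable {A : Type*} [CStarAlgebra A]

lemma exists_sqrt_aux (a b : A) (ha : IsSelfAdjoint a) (hb : IsSelfAdjoint b)
    (hau : IsUnit a) (hbu : IsUnit b)
    (hclose : ‖(↑hau.unit⁻¹ : A)‖ * ‖b - a‖ ≤ 1/2) :
    ∃ k : A, IsUnit k ∧ star k * a * k = b := by
  set a' : A := ↑hau.unit⁻¹ with ha'
  have haa' : a * a' = 1 := hau.mul_val_inv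
  have ha'a : a' * a = 1 := hau.val_inv_mul
  have hstara' : star a' = a' := by
    have h1 : star a' * a = 1 := by
      have := congrArg star haa'
      rwa [star_mul, ha.star_eq, star_one] at this
    calc star a' = star a' * (a * a') := by rw [haa', mul_one]
      _ = (star a' * a) * a' := by rw [mul_assoc]
      _ = a' := by rw [h1, one_mul]
  set c : A := a' * b with hc
  set e : A := 1 - c with he
  -- norm estimate
  have hnorme : ‖e‖ ≤ 1/2 := by
    have : e = a' * (a - b) := by
      rw [he, hc, mul_sub, ha'a]
    rw [this]
    calc ‖a' * (a - b)‖ ≤ ‖a'‖ * ‖a - b‖ := norm_mul_le _ _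
      _ = ‖a'‖ * ‖b - a‖ := by rw [norm_sub_rev]
      _ ≤ 1/2 := hclose
  -- star behavior
  have hstarc : star c = a * c * a' := by
    rw [hc, star_mul, hb.star_eq, hstara']
    calc b * a' = (a * a') * (b * a') := by rw [haa', one_mul]
      _ = a * (a' * b) * a' := by simp only [mul_assoc]
  have hstare : star e = a * e * a' := by
    rw [he, star_sub, star_one, hstarc, mul_sub, sub_mul, mul_one, haa']
  have hecommc : Commute e c := by
    rw [he]; exact ((Commute.one_left c).sub_left (Commute.refl c))
  -- the iteration
  set T : A → A := fun x => (1/2 : ℝ) • (e + x * x) with hT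
  set y : ℕ → A := fun n => T^[n] 0 with hy
  have hy0 : y 0 = 0 := rfl
  have hysucc : ∀ n, y (n + 1) = T (y n) := by
    intro n; rw [hy]; simp [Function.iterate_succ_apply']
  have hbound : ∀ n, ‖y n‖ ≤ 1/2 := by
    intro n; induction n with
    | zero => simp [hy0]
    | succ n ih =>
      rw [hysucc, hT]
      simp only [norm_smul, Real.norm_eq_abs]
      calc |(1/2 : ℝ)| * ‖e + y n * y n‖ ≤ (1/2) * (‖e‖ + ‖y n‖ * ‖y n‖) := by
            rw [abs_of_pos (by norm_num : (0:ℝ) < 1/2)]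
            gcongr
            exact (norm_add_le _ _).trans (by gcongr; exact norm_mul_le _ _)
        _ ≤ (1/2) * (1/2 + (1/2) * (1/2)) := by gcongr <;> first | exact hnorme | exact ih
        _ ≤ 1/2 := by norm_num
  have hdiff : ∀ n, ‖y (n+1) - y n‖ ≤ (1/2)^(n+1) := by
    intro n; induction n with
    | zero =>
      rw [hysucc, hy0, hT]
      simp only [mul_zero, add_zero, sub_zero, norm_smul, Real.norm_eq_abs]
      rw [abs_of_pos (by norm_num : (0:ℝ) < 1/2)]
      calc (1/2 : ℝ) * ‖e‖ ≤ (1/2) * (1/2) := by gcongr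
        _ ≤ (1/2)^(0+1) := by norm_num
    | succ n ih =>
      have key : y (n+2) - y (n+1) = (1/2 : ℝ) • (y (n+1) * y (n+1) - y n * y n) := by
        rw [hysucc (n+1), hysucc n, hT]
        simp only [← smul_sub]
        congr 1
        abel
      rw [key]
      have hsq : ‖y (n+1) * y (n+1) - y n * y n‖ ≤ ‖y (n+1) - y n‖ := by
        have hdec : y (n+1) * y (n+1) - y n * y n
            = y (n+1) * (y (n+1) - y n) + (y (n+1) - y n) * y n := by
          noncomm_ring
        rw [hdec]
        calc ‖y (n+1) * (y (n+1) - y n) + (y (n+1) - y n) * y n‖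
            ≤ ‖y (n+1) * (y (n+1) - y n)‖ + ‖(y (n+1) - y n) * y n‖ := norm_add_le _ _
          _ ≤ ‖y (n+1)‖ * ‖y (n+1) - y n‖ + ‖y (n+1) - y n‖ * ‖y n‖ := by
              gcongr <;> exact norm_mul_le _ _
          _ ≤ (1/2) * ‖y (n+1) - y n‖ + ‖y (n+1) - y n‖ * (1/2) := by
              gcongr <;> [exact hbound _; exact hbound _]
          _ = ‖y (n+1) - y n‖ := by ring
      simp only [norm_smul, Real.norm_eq_abs]
      rw [abs_of_pos (by norm_num : (0:ℝ) < 1/2)]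
      calc (1/2:ℝ) * ‖y (n+1) * y (n+1) - y n * y n‖ ≤ (1/2) * ((1/2)^(n+1)) := by
            gcongr; exact hsq.trans ih
        _ = (1/2)^(n+2) := by ring
  -- Cauchy, limit
  have hcauchy : CauchySeq y := by
    apply cauchySeq_of_le_geometric (1/2) 1 (by norm_num)
    intro n
    rw [dist_eq_norm, norm_sub_rev]
    calc ‖y (n+1) - y n‖ ≤ (1/2)^(n+1) := hdiff n
      _ ≤ 1 * (1/2)^n := by rw [one_mul, pow_succ]; nlinarith [pow_pos (by norm_num : (0:ℝ) < 1/2) n]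
  obtain ⟨z, hz⟩ := cauchySeq_tendsto_of_complete hcauchy
  have hTcont : Continuous T := by
    rw [hT]; exact (continuous_const.add (continuous_id.mul continuous_id)).const_smul _
  have hfix : T z = z := by
    have h1 : Filter.Tendsto (fun n => y (n+1)) Filter.atTop (nhds z) :=
      hz.comp (Filter.tendsto_add_atTop_nat 1)
    have h2 : Filter.Tendsto (fun n => T (y n)) Filter.atTop (nhds (T z)) :=
      (hTcont.tendsto z).comp hz
    exact tendsto_nhds_unique h2 (by simpa only [hysucc] using h1)
  -- commutation with c
  have hycomm : ∀ n, Commute (y n) c := by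
    intro n; induction n with
    | zero => rw [hy0]; exact Commute.zero_left c
    | succ n ih =>
      rw [hysucc, hT]
      exact ((hecommc.add_left (ih.mul_left ih)).smul_left _)
  have hzcomm : Commute z c := by
    have h1 : Filter.Tendsto (fun n => y n * c) Filter.atTop (nhds (z * c)) :=
      hz.mul tendsto_const_nhds
    have h2 : Filter.Tendsto (fun n => c * y n) Filter.atTop (nhds (c * z)) :=
      tendsto_const_nhds.mul hz
    have : (fun n => y n * c) = fun n => c * y n := by
      funext n; exact (hycomm n).eq
    have h2' : Filter.Tendsto (fun n => y n * c) Filter.atTop (nhds (c * z)) := by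
      rw [this]; exact h2
    rw [Commute, SemiconjBy]
    exact tendsto_nhds_unique h1 h2'
  -- star behavior of z
  have hystar : ∀ n, star (y n) = a * y n * a' := by
    intro n; induction n with
    | zero => rw [hy0]; simp
    | succ n ih =>
      have hrw : star (T (y n)) = (1/2:ℝ) • (star e + star (y n) * star (y n)) := by
        simp only [hT, star_smul, star_trivial, star_add, star_mul]
      have hrw2 : T (y n) = (1/2:ℝ) • (e + y n * y n) := by simp only [hT]
      rw [hysucc n, hrw, ih, hstare, hrw2, mul_smul_comm, smul_mul_assoc]
      congr 1
      calc a * e * a' + a * y n * a' * (a * y n * a')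
          = a * e * a' + a * (y n * (a' * a) * y n) * a' := by simp only [mul_assoc]
        _ = a * (e + y n * y n) * a' := by rw [ha'a]; noncomm_ring
  have hzstar : star z = a * z * a' := by
    have h1 : Filter.Tendsto (fun n => star (y n)) Filter.atTop (nhds (star z)) :=
      (continuous_star.tendsto z).comp hz
    have h2 : Filter.Tendsto (fun n => a * y n * a') Filter.atTop (nhds (a * z * a')) :=
      (tendsto_const_nhds.mul hz).mul tendsto_const_nhds
    have : (fun n => star (y n)) = fun n => a * y n * a' := funext hystar
    exact tendsto_nhds_unique (this ▸ h1) h2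
  -- k := 1 - z
  set k : A := 1 - z with hk
  have hfix' : e + z * z = z + z := by
    have := congrArg (fun w => (2:ℝ) • w) hfix
    simp only [hT, smul_smul] at this
    norm_num at this
    rw [this, two_smul]
  have hkk : k * k = c := by
    have expand : k * k = 1 - z - z + z * z := by rw [hk]; noncomm_ring
    have hzz : z * z = z + z - e := by rw [← hfix']; abel
    rw [expand, hzz, he]; abel
  have hcu : IsUnit c := hau.unit⁻¹.isUnit.mul hbu
  have hkcomm : Commute k c := (Commute.one_left c).sub_left hzcomm
  have hkcu : Commute k ↑hcu.unit⁻¹ := by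
    have : Commute k ↑hcu.unit := by rwa [hcu.unit_spec]
    exact this.units_inv_right
  have hku : IsUnit k := by
    refine ⟨⟨k, ↑hcu.unit⁻¹ * k, ?_, ?_⟩, rfl⟩
    · calc k * (↑hcu.unit⁻¹ * k) = (k * ↑hcu.unit⁻¹) * k := by rw [mul_assoc]
        _ = (↑hcu.unit⁻¹ * k) * k := by rw [hkcu.eq]
        _ = ↑hcu.unit⁻¹ * c := by rw [mul_assoc, hkk]
        _ = 1 := hcu.val_inv_mul
    · calc (↑hcu.unit⁻¹ * k) * k = ↑hcu.unit⁻¹ * c := by rw [mul_assoc, hkk]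
        _ = 1 := hcu.val_inv_mul
  refine ⟨k, hku, ?_⟩
  have hkstar : star k = a * k * a' := by
    rw [hk, star_sub, star_one, hzstar, mul_sub, sub_mul, mul_one, haa']
  calc star k * a * k = a * k * a' * a * k := by rw [hkstar]
    _ = a * k * (a' * a) * k := by simp only [mul_assoc]
    _ = a * (k * k) := by rw [ha'a, mul_one, mul_assoc]
    _ = a * (a' * b) := by rw [hkk, hc]
    _ = (a * a') * b := by rw [mul_assoc]
    _ = b := by rw [haa', one_mul]

end Key

/-- Homotopy invariance of symmetric forms: if two selfadjoint invertible elements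
`φ, ψ` of a unital C*-algebra are connected by a continuous path of selfadjoint
invertible elements, then they are isometric: `star k * φ * k = ψ` for some
invertible `k`. -/
theorem symmetric_forms_isometric_of_path (A : Type*) [CStarAlgebra A]
    (φ ψ : A) (hφ : IsSelfAdjoint φ) (hψ : IsSelfAdjoint ψ)
    (hφu : IsUnit φ) (hψu : IsUnit ψ)
    (γ : C(unitInterval, A)) (hγ0 : γ 0 = φ) (hγ1 : γ 1 = ψ)
    (hγ : ∀ t, IsSelfAdjoint (γ t) ∧ IsUnit (γ t)) :
    ∃ k : A, IsUnit k ∧ star k * φ * k = ψ := by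
  set S : Set unitInterval := {t | IsCongruent φ (γ t)} with hS
  have key : ∀ t : unitInterval, ∃ U : Set unitInterval,
      IsOpen U ∧ t ∈ U ∧ ∀ s ∈ U, IsCongruent (γ t) (γ s) := by
    intro t
    obtain ⟨hsa, hu⟩ := hγ t
    set M : ℝ := ‖(↑hu.unit⁻¹ : A)‖ with hM
    have hM0 : 0 ≤ M := norm_nonneg _
    set ε : ℝ := (2 * (M + 1))⁻¹ with hε
    have hε0 : 0 < ε := by rw [hε]; positivity
    refine ⟨(fun s => γ s) ⁻¹' Metric.ball (γ t) ε, ?_, ?_, ?_⟩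
    · exact (Metric.isOpen_ball).preimage γ.continuous
    · simp [Metric.mem_ball, hε0]
    · intro s hs
      simp only [Set.mem_preimage, Metric.mem_ball, dist_eq_norm] at hs
      obtain ⟨hsa', hu'⟩ := hγ s
      refine exists_sqrt_aux (γ t) (γ s) hsa hsa' hu hu' ?_
      have h1 : M * ‖γ s - γ t‖ ≤ M * ε := by
        apply mul_le_mul_of_nonneg_left (le_of_lt hs) hM0
      refine h1.trans ?_
      rw [hε, ← one_div, mul_one_div, div_le_div_iff₀ (by positivity) (by norm_num)]
      nlinarith
  have hSopen : IsOpen S := by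
    rw [isOpen_iff_forall_mem_open]
    intro t ht
    obtain ⟨U, hUopen, htU, hU⟩ := key t
    exact ⟨U, fun s hs => IsCongruent.trans ht (hU s hs), hUopen, htU⟩
  have hSclosed : IsClosed S := by
    rw [← isOpen_compl_iff, isOpen_iff_forall_mem_open]
    intro t ht
    obtain ⟨U, hUopen, htU, hU⟩ := key t
    refine ⟨U, fun s hs hsS => ht ?_, hUopen, htU⟩
    exact IsCongruent.trans hsS (IsCongruent.symm (hU s hs))
  have h0 : (0 : unitInterval) ∈ S := by
    rw [hS, Set.mem_setOf_eq, hγ0]; exact IsCongruent.refl φ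
  have huniv : S = Set.univ := IsClopen.eq_univ ⟨hSclosed, hSopen⟩ ⟨0, h0⟩
  have h1 : (1 : unitInterval) ∈ S := huniv ▸ Set.mem_univ _
  rw [hS, Set.mem_setOf_eq, hγ1] at h1
  exact h1
end

section
/- Let A be a unital C*-algebra and let k = (k_{ij}) be a 2×2 matrix over A which is an isometry of the form η = diag(1, -1) with itself, i.e., k*·η·k = η and k·η·k* = η, where k* is the conjugate-transpose. Then the diagonal entries k₁₁ and k₂₂ are invertible in A. (This is the key step in the uniqueness of the decomposition of a symmetric form into positive and negative parts: it follows from k₁₁k₁₁* = 1 + k₁₂k₁₂* and k₁₁*k₁₁ = 1 + k₁₂*k₁₂, which show k₁₁ has both a left and a right inverse.) -/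
/-!
Comparing diagonal entries in `kᴴ η k = η` and `k η kᴴ = η` gives
`k₁₁ k₁₁* = 1 + k₁₂ k₁₂*` and `k₁₁* k₁₁ = 1 + k₂₁* k₂₁` (and similarly for `k₂₂`).
In a C*-algebra `1 + x x*` is invertible since it dominates `1`, so `k₁₁` has a right
inverse `k₁₁* (k₁₁ k₁₁*)⁻¹` and a left inverse `(k₁₁* k₁₁)⁻¹ k₁₁*`, hence is invertible.
-/

open Matrix

section

variable {A : Type*}

theorem isUnit_of_isUnit_mul_star_of_isUnit_star_mul [Monoid A] [StarMul A] {a : A}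
    (h₁ : IsUnit (a * star a)) (h₂ : IsUnit (star a * a)) : IsUnit a :=
  isUnit_iff_exists_and_exists.2
    ⟨⟨star a * ↑h₁.unit⁻¹, by rw [← mul_assoc, h₁.mul_val_inv]⟩,
      ⟨↑h₂.unit⁻¹ * star a, by rw [mul_assoc, h₂.val_inv_mul]⟩⟩

section Signature

variable [Ring A] [StarRing A] (k : Matrix (Fin 2) (Fin 2) A) (i : Fin 2)

theorem conjTranspose_mul_diagonal_one_neg_one_mul_apply_self :
    (kᴴ * diagonal ![1, -1] * k : Matrix (Fin 2) (Fin 2) A) i i =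
      star (k 0 i) * k 0 i - star (k 1 i) * k 1 i := by
  simp [mul_apply, Fin.sum_univ_two, sub_eq_add_neg]

theorem mul_diagonal_one_neg_one_mul_conjTranspose_apply_self :
    (k * diagonal ![1, -1] * kᴴ : Matrix (Fin 2) (Fin 2) A) i i =
      k i 0 * star (k i 0) - k i 1 * star (k i 1) := by
  simp [mul_apply, Fin.sum_univ_two, sub_eq_add_neg]

end Signature

namespace CStarAlgebra

variable [CStarAlgebra A]

theorem isUnit_star_mul_self_add_one (x : A) : IsUnit (star x * x + 1) := by
  let := spectralOrder A
  have := spectralOrderedRing A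
  exact isUnit_of_le 1 (le_add_of_nonneg_left (star_mul_self_nonneg x))

theorem isUnit_of_mul_star_sub_eq_one_of_star_mul_sub_eq_one {a x y : A}
    (hx : a * star a - x * star x = 1) (hy : star a * a - star y * y = 1) : IsUnit a := by
  rw [sub_eq_iff_eq_add'] at hx hy
  refine isUnit_of_isUnit_mul_star_of_isUnit_star_mul ?_ ?_
  · simpa [hx] using isUnit_star_mul_self_add_one (star x)
  · simpa [hy] using isUnit_star_mul_self_add_one y

end CStarAlgebra

end

/-- If a `2×2` matrix `k` over a unital C*-algebra is an isometry of the form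
`η = diag(1, -1)` with itself (`k* η k = η` and `k η k* = η`), then its diagonal
entries `k₁₁` and `k₂₂` are invertible. -/
theorem isometry_diag_entries_invertible (A : Type*) [CStarAlgebra A]
    (k : Matrix (Fin 2) (Fin 2) A)
    (h1 : k.conjTranspose * Matrix.diagonal ![1, -1] * k = Matrix.diagonal ![1, -1])
    (h2 : k * Matrix.diagonal ![1, -1] * k.conjTranspose = Matrix.diagonal ![1, -1]) :
    IsUnit (k 0 0) ∧ IsUnit (k 1 1) := by
  have h1_00 := congr($h1 0 0)
  have h2_00 := congr($h2 0 0)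
  have h1_11 := congr(-$h1 1 1)
  have h2_11 := congr(-$h2 1 1)
  simp only [conjTranspose_mul_diagonal_one_neg_one_mul_apply_self,
    mul_diagonal_one_neg_one_mul_conjTranspose_apply_self, diagonal_apply_eq, neg_sub,
    cons_val_zero, cons_val_one, neg_neg] at h1_00 h2_00 h1_11 h2_11
  exact ⟨CStarAlgebra.isUnit_of_mul_star_sub_eq_one_of_star_mul_sub_eq_one h2_00 h1_00,
    CStarAlgebra.isUnit_of_mul_star_sub_eq_one_of_star_mul_sub_eq_one h2_11 h1_11⟩
end
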